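/- One has f(3/2, √3) = (3^(1/4)/2) · ∫_0^(1/√3) [ ( √(X−2x) + √(X+2x) ) / ( √( (x²+1)·(1−3x²) ) · √( X·(X + 2/√3) ) ) ] dx, where X = X(x) = √(x²+1), and f(a,b) = ∫_0^∞ (x²+1)^(−a) · (φ(x) + √(φ(x)))^(−1/2) dx with φ(x) = 1 + (4/b²)·(x/(x²+1))². -/

import Mathlib

open Real MeasureTheory

noncomputable def φ (b x : ℝ) : ℝ := 1 + (4 / b ^ 2) * (x / (x ^ 2 + 1)) ^ 2

noncomputable def f (a b : ℝ) : ℝ :=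
  ∫ x in Set.Ioi (0 : ℝ),
    (x ^ 2 + 1) ^ (-a) * (φ b x + Real.sqrt (φ b x)) ^ (-(1 / 2) : ℝ)

noncomputable def X (x : ℝ) : ℝ := Real.sqrt (x ^ 2 + 1)

noncomputable def hh (x : ℝ) : ℝ :=
  (x ^ 2 + 1) ^ (-(3/2 : ℝ)) * (φ (Real.sqrt 3) x + Real.sqrt (φ (Real.sqrt 3) x)) ^ (-(1 / 2) : ℝ)

noncomputable def Dp (t : ℝ) : ℝ := (3*t^2+1)*(t^2+3)

noncomputable def Φ (t : ℝ) : ℝ := (1 - t^2) / Real.sqrt (Dp t)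

noncomputable def gg (x : ℝ) : ℝ :=
  (Real.sqrt (X x - 2 * x) + Real.sqrt (X x + 2 * x)) /
    (Real.sqrt ((x ^ 2 + 1) * (1 - 3 * x ^ 2)) *
      Real.sqrt (X x * (X x + 2 / Real.sqrt 3)))

lemma Dp_pos (t : ℝ) : 0 < Dp t := by unfold Dp; positivity

lemma sqrtDp_pos (t : ℝ) : 0 < Real.sqrt (Dp t) := Real.sqrt_pos.2 (Dp_pos t)

lemma c_pos : (0:ℝ) < Real.sqrt 3 := Real.sqrt_pos.2 (by norm_num)

lemma c_sq : (Real.sqrt 3)^2 = 3 := Real.sq_sqrt (by norm_num)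

lemma P_pos (t : ℝ) : (0:ℝ) < t^2 + 1 := by positivity

-- φ in closed form
lemma phi_eq (t : ℝ) : φ (Real.sqrt 3) t = Dp t / (3 * (t^2+1)^2) := by
  unfold φ Dp
  rw [c_sq]
  have h := P_pos t
  field_simp
  ring

lemma sqrt_phi_eq (t : ℝ) :
    Real.sqrt (φ (Real.sqrt 3) t) = Real.sqrt (Dp t) / (Real.sqrt 3 * (t^2+1)) := by
  rw [phi_eq]
  have : Dp t / (3 * (t^2+1)^2) = (Real.sqrt (Dp t) / (Real.sqrt 3 * (t^2+1)))^2 := by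
    rw [div_pow, mul_pow, Real.sq_sqrt (Dp_pos t).le, c_sq]
  rw [this, Real.sqrt_sq (by positivity)]

lemma rpow_neg_half (y : ℝ) (hy : 0 ≤ y) : y ^ (-(1/2) : ℝ) = 1 / Real.sqrt y := by
  rw [Real.rpow_neg hy, Real.sqrt_eq_rpow]
  exact (one_div _).symm

lemma rpow_neg_three_half (y : ℝ) (hy : 0 < y) : y ^ (-(3/2 : ℝ)) = 1 / (y * Real.sqrt y) := by
  rw [Real.rpow_neg hy.le, show (3/2:ℝ) = 1 + 1/2 by norm_num, Real.rpow_add hy,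
    Real.rpow_one, ← Real.sqrt_eq_rpow, one_div]

lemma hh_eq (t : ℝ) :
    hh t = Real.sqrt 3 / (Real.sqrt (t^2+1) * Real.sqrt (Real.sqrt (Dp t)) *
      Real.sqrt (Real.sqrt 3 * (t^2+1) + Real.sqrt (Dp t))) := by
  have hP := P_pos t
  set c := Real.sqrt 3 with hcdef
  set r := Real.sqrt (Dp t) with hrdef
  have hc : 0 < c := c_pos
  have hr : 0 < r := sqrtDp_pos t
  have hc2 : c^2 = 3 := c_sq
  have hr2 : r^2 = Dp t := Real.sq_sqrt (Dp_pos t).le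
  have hsum : φ (Real.sqrt 3) t + Real.sqrt (φ (Real.sqrt 3) t)
      = r * (c * (t^2+1) + r) / (3 * (t^2+1)^2) := by
    rw [sqrt_phi_eq, phi_eq, ← hrdef, ← hcdef, ← hr2, ← hc2]
    field_simp
    ring
  set ρ := Real.sqrt r with hρdef
  set s := Real.sqrt (c * (t^2+1) + r) with hsdef
  have hρ : 0 < ρ := Real.sqrt_pos.2 hr
  have hs : 0 < s := Real.sqrt_pos.2 (by positivity)
  have hρ2 : ρ^2 = r := Real.sq_sqrt hr.le
  have hs2 : s^2 = c * (t^2+1) + r := Real.sq_sqrt (by positivity)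
  have hsq : r * (c * (t^2+1) + r) / (3 * (t^2+1)^2)
      = (ρ * s / (c * (t^2+1)))^2 := by
    rw [div_pow, mul_pow, mul_pow, hρ2, hs2, hc2]
  unfold hh
  rw [hsum, rpow_neg_half _ (by positivity), hsq,
    Real.sqrt_sq (by positivity), rpow_neg_three_half _ hP]
  set a := Real.sqrt (t^2+1) with hadef
  have ha : 0 < a := Real.sqrt_pos.2 hP
  have ha2 : a^2 = t^2+1 := Real.sq_sqrt hP.le
  rw [← ha2]
  field_simp

noncomputable def Φd (t : ℝ) : ℝ := -(16 * t * (t^2+1) / (Real.sqrt (Dp t) * Dp t))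

lemma hasDerivAt_Φ (t : ℝ) : HasDerivAt Φ (Φd t) t := by
  have hr := sqrtDp_pos t
  have hD := Dp_pos t
  have hnum : HasDerivAt (fun t : ℝ => 1 - t^2) (-(2*t)) t := by
    simpa using (hasDerivAt_pow 2 t).const_sub 1
  have hDp : HasDerivAt Dp (12*t^3 + 20*t) t := by
    have := (((hasDerivAt_pow 2 t).const_mul 3).add_const 1).mul
      ((hasDerivAt_pow 2 t).add_const 3)
    refine this.congr_deriv ?_
    push_cast
    ring
  have hden : HasDerivAt (fun t : ℝ => Real.sqrt (Dp t))
      (1 / (2 * Real.sqrt (Dp t)) * (12*t^3 + 20*t)) t :=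
    (Real.hasDerivAt_sqrt hD.ne').comp t hDp
  have := hnum.div hden hr.ne'
  refine this.congr_deriv ?_
  symm
  have hr2 : Real.sqrt (Dp t) ^ 2 = Dp t := Real.sq_sqrt hD.le
  unfold Φd
  rw [hr2]
  field_simp
  unfold Dp at hr2 ⊢
  linear_combination (4*t) * hr2

lemma continuous_Φ : Continuous Φ := by
  unfold Φ
  apply Continuous.div (by continuity) (Real.continuous_sqrt.comp (by unfold Dp; continuity))
  exact fun t => (sqrtDp_pos t).ne'

lemma Φd_neg {t : ℝ} (ht : t ∈ Set.Ioo (0:ℝ) 1) : Φd t < 0 := by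
  unfold Φd
  have h1 : 0 < 16 * t * (t^2+1) / (Real.sqrt (Dp t) * Dp t) := by
    apply div_pos (by nlinarith [ht.1]) (mul_pos (sqrtDp_pos t) (Dp_pos t))
  linarith

lemma strictAntiOn_Φ : StrictAntiOn Φ (Set.Icc 0 1) := by
  apply strictAntiOn_of_deriv_neg (convex_Icc 0 1) continuous_Φ.continuousOn
  intro t ht
  rw [interior_Icc] at ht
  rw [(hasDerivAt_Φ t).deriv]
  exact Φd_neg ht

lemma Φ_zero : Φ 0 = 1 / Real.sqrt 3 := by
  unfold Φ Dp
  norm_num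

lemma Φ_one : Φ 1 = 0 := by
  unfold Φ Dp
  norm_num

lemma image_Φ : Φ '' Set.Ioo 0 1 = Set.Ioo 0 (1 / Real.sqrt 3) := by
  apply Set.Subset.antisymm
  · rintro _ ⟨t, ht, rfl⟩
    constructor
    · rw [← Φ_one]
      exact strictAntiOn_Φ (Set.Ioo_subset_Icc_self ht) (by norm_num) ht.2
    · rw [← Φ_zero]
      exact strictAntiOn_Φ (by norm_num) (Set.Ioo_subset_Icc_self ht) ht.1
  · have := intermediate_value_Ioo' (by norm_num : (0:ℝ) ≤ 1) continuous_Φ.continuousOn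
    rw [Φ_zero, Φ_one] at this
    exact this

lemma injOn_Φ : Set.InjOn Φ (Set.Ioo 0 1) :=
  strictAntiOn_Φ.injOn.mono Set.Ioo_subset_Icc_self

lemma q_eq : Real.sqrt (Real.sqrt 3) = (3:ℝ) ^ ((1:ℝ)/4) := by
  rw [Real.sqrt_eq_rpow, Real.sqrt_eq_rpow, ← Real.rpow_mul (by norm_num : (0:ℝ) ≤ 3)]
  norm_num

lemma key_gg {t : ℝ} (ht : t ∈ Set.Ioo (0:ℝ) 1) :
    ((3:ℝ) ^ ((1:ℝ)/4) / 2) * (|Φd t| * gg (Φ t)) =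
      Real.sqrt 3 * (1 + t) / (Real.sqrt (t^2+1) * Real.sqrt (Real.sqrt (Dp t)) *
        Real.sqrt (Real.sqrt 3 * (t^2+1) + Real.sqrt (Dp t))) := by
  obtain ⟨ht0, ht1⟩ := ht
  have hP := P_pos t
  have hD := Dp_pos t
  set c := Real.sqrt 3 with hcdef
  set r := Real.sqrt (Dp t) with hrdef
  have hc : 0 < c := c_pos
  have hr : 0 < r := sqrtDp_pos t
  have hc2 : c^2 = 3 := c_sq
  have hr2 : r^2 = Dp t := Real.sq_sqrt hD.le
  set ρ := Real.sqrt r with hρdef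
  set s := Real.sqrt (c * (t^2+1) + r) with hsdef
  set a := Real.sqrt (t^2+1) with hadef
  set q := Real.sqrt c with hqdef
  have hρ : 0 < ρ := Real.sqrt_pos.2 hr
  have hs : 0 < s := Real.sqrt_pos.2 (by positivity)
  have ha : 0 < a := Real.sqrt_pos.2 hP
  have hq : 0 < q := Real.sqrt_pos.2 hc
  have hρ2 : ρ^2 = r := Real.sq_sqrt hr.le
  have hs2 : s^2 = c * (t^2+1) + r := Real.sq_sqrt (by positivity)
  have ha2 : a^2 = t^2+1 := Real.sq_sqrt hP.le
  have hq2 : q^2 = c := Real.sq_sqrt hc.le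
  -- x² + 1
  have hx21 : (Φ t)^2 + 1 = 4*(t^2+1)^2 / Dp t := by
    unfold Φ
    rw [← hrdef, div_pow, hr2, div_add' _ _ _ hD.ne']
    rw [div_eq_div_iff hD.ne' hD.ne']
    unfold Dp
    ring
  have hX : X (Φ t) = 2*(t^2+1)/r := by
    unfold X
    rw [hx21, show 4*(t^2+1)^2 / Dp t = (2*(t^2+1)/r)^2 by rw [div_pow, hr2]; ring,
      Real.sqrt_sq (by positivity)]
  have hXm : X (Φ t) - 2 * Φ t = 4*t^2/r := by
    rw [hX]
    unfold Φ
    rw [← hrdef]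
    field_simp
    ring
  have hXp : X (Φ t) + 2 * Φ t = 4/r := by
    rw [hX]
    unfold Φ
    rw [← hrdef]
    field_simp
    ring
  have s1 : Real.sqrt (X (Φ t) - 2 * Φ t) = 2*t/ρ := by
    rw [hXm, show 4*t^2/r = (2*t/ρ)^2 by rw [div_pow, hρ2]; ring,
      Real.sqrt_sq (by positivity)]
  have s2 : Real.sqrt (X (Φ t) + 2 * Φ t) = 2/ρ := by
    rw [hXp, show 4/r = (2/ρ)^2 by rw [div_pow, hρ2]; norm_num,
      Real.sqrt_sq (by positivity)]
  have h13 : 1 - 3 * (Φ t)^2 = 16*t^2/Dp t := by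
    unfold Φ
    rw [← hrdef, div_pow, hr2]
    field_simp
    unfold Dp
    ring
  have s3 : Real.sqrt (((Φ t)^2 + 1) * (1 - 3*(Φ t)^2)) = 8*t*(t^2+1)/Dp t := by
    rw [hx21, h13, show 4*(t^2+1)^2/Dp t * (16*t^2/Dp t) = (8*t*(t^2+1)/Dp t)^2 by
      rw [div_pow]; field_simp; ring, Real.sqrt_sq (by positivity)]
  have hXp2 : X (Φ t) + 2/c = 2*(c*(t^2+1) + r)/(c*r) := by
    rw [hX]
    field_simp
  have s4 : Real.sqrt (X (Φ t) * (X (Φ t) + 2/c)) = 2*a*s/(q*r) := by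
    have e1 : X (Φ t) * (X (Φ t) + 2/c) = 4*(t^2+1)*(c*(t^2+1)+r)/(c*Dp t) := by
      rw [hXp2, hX, ← hr2]
      field_simp
      ring
    rw [e1, show 4*(t^2+1)*(c*(t^2+1)+r)/(c*Dp t) = (2*a*s/(q*r))^2 by
      rw [div_pow, mul_pow, mul_pow, mul_pow, ha2, hs2, hq2, hr2]; norm_num,
      Real.sqrt_sq (by positivity)]
  have habs : |Φd t| = 16*t*(t^2+1)/(r*Dp t) := by
    rw [abs_of_neg (Φd_neg ⟨ht0, ht1⟩)]
    unfold Φd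
    rw [← hrdef, neg_neg]
  unfold gg
  rw [habs, s1, s2, s3, s4, ← q_eq, ← hqdef, ← hq2, ← hr2]
  field_simp
  ring

lemma phi_inv {t : ℝ} (ht : 0 < t) : φ (Real.sqrt 3) t⁻¹ = φ (Real.sqrt 3) t := by
  unfold φ
  congr 1
  rw [div_pow, div_pow]
  congr 1 <;> field_simp <;> ring

lemma hh_inv {t : ℝ} (ht : 0 < t) : hh t⁻¹ = t^3 * hh t := by
  unfold hh
  rw [phi_inv ht]
  have hP := P_pos t
  have h1 : (t⁻¹)^2 + 1 = (t^2+1)/t^2 := by field_simp; ring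
  have h2 : Real.sqrt ((t^2+1)/t^2) = Real.sqrt (t^2+1) / t := by
    rw [show (t^2+1)/t^2 = (Real.sqrt (t^2+1)/t)^2 by
      rw [div_pow, Real.sq_sqrt hP.le], Real.sqrt_sq (by positivity)]
  have ha : 0 < Real.sqrt (t^2+1) := Real.sqrt_pos.2 hP
  rw [h1, rpow_neg_three_half _ (by positivity), h2,
    rpow_neg_three_half _ hP]
  rw [show (t^2+1)/t^2 * (Real.sqrt (t^2+1)/t) = (t^2+1) * Real.sqrt (t^2+1) / t^3 by
    field_simp]
  field_simp

lemma key_total {t : ℝ} (ht : t ∈ Set.Ioo (0:ℝ) 1) :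
    hh t + (t^2)⁻¹ * hh t⁻¹ = ((3:ℝ) ^ ((1:ℝ)/4) / 2) * (|Φd t| * gg (Φ t)) := by
  rw [key_gg ht, hh_inv ht.1, hh_eq]
  have ht0 := ht.1
  have ha : 0 < Real.sqrt (t^2+1) := Real.sqrt_pos.2 (P_pos t)
  have hρ : 0 < Real.sqrt (Real.sqrt (Dp t)) := Real.sqrt_pos.2 (sqrtDp_pos t)
  have hs : 0 < Real.sqrt (Real.sqrt 3 * (t^2+1) + Real.sqrt (Dp t)) :=
    Real.sqrt_pos.2 (by positivity)
  field_simp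

lemma phi_ge_one (x : ℝ) : 1 ≤ φ (Real.sqrt 3) x := by
  unfold φ
  have : 0 ≤ (4 / Real.sqrt 3 ^ 2) * (x / (x ^ 2 + 1)) ^ 2 := by positivity
  linarith

lemma continuous_phi : Continuous (φ (Real.sqrt 3)) := by
  unfold φ
  apply continuous_const.add
  apply continuous_const.mul
  apply Continuous.pow
  exact continuous_id.div (by continuity) (fun x => (P_pos x).ne')

lemma continuous_hh : Continuous hh := by
  unfold hh
  apply Continuous.mul
  · apply Continuous.rpow_const (by continuity)
    exact fun x => Or.inl (P_pos x).ne'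
  · apply Continuous.rpow_const
      (continuous_phi.add (Real.continuous_sqrt.comp continuous_phi))
    intro x
    left
    have h1 := phi_ge_one x
    have h2 : 0 ≤ Real.sqrt (φ (Real.sqrt 3) x) := Real.sqrt_nonneg _
    exact ne_of_gt (show (0:ℝ) < φ (Real.sqrt 3) x + Real.sqrt (φ (Real.sqrt 3) x) by linarith)

lemma hh_nonneg (x : ℝ) : 0 ≤ hh x := by
  unfold hh
  have h1 := phi_ge_one x
  have h2 : 0 ≤ Real.sqrt (φ (Real.sqrt 3) x) := Real.sqrt_nonneg _
  apply mul_nonneg (Real.rpow_nonneg (P_pos x).le _) (Real.rpow_nonneg (by linarith) _)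

lemma hh_le (x : ℝ) : hh x ≤ (1 + x^2)⁻¹ := by
  unfold hh
  have h1 := phi_ge_one x
  have h2 : 0 ≤ Real.sqrt (φ (Real.sqrt 3) x) := Real.sqrt_nonneg _
  have hb : (φ (Real.sqrt 3) x + Real.sqrt (φ (Real.sqrt 3) x)) ^ (-(1/2) : ℝ) ≤ 1 :=
    Real.rpow_le_one_of_one_le_of_nonpos (by linarith) (by norm_num)
  have hA : (x^2+1) ^ (-(3/2) : ℝ) ≤ (1 + x^2)⁻¹ := by
    rw [show (1 + x^2)⁻¹ = (x^2+1) ^ (-1 : ℝ) by rw [Real.rpow_neg_one, add_comm]]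
    exact Real.rpow_le_rpow_of_exponent_le (by nlinarith [sq_nonneg x]) (by norm_num)
  calc (x^2+1) ^ (-(3/2) : ℝ) * (φ (Real.sqrt 3) x + Real.sqrt (φ (Real.sqrt 3) x)) ^ (-(1/2) : ℝ)
      ≤ (x^2+1) ^ (-(3/2) : ℝ) * 1 := by
        apply mul_le_mul_of_nonneg_left hb (Real.rpow_nonneg (P_pos x).le _)
    _ = (x^2+1) ^ (-(3/2) : ℝ) := mul_one _
    _ ≤ (1 + x^2)⁻¹ := hA

lemma integrableOn_hh : IntegrableOn hh (Set.Ioi (0:ℝ)) := by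
  apply Integrable.mono' (integrable_inv_one_add_sq.restrict (μ := volume) (s := Set.Ioi 0))
    continuous_hh.aestronglyMeasurable.restrict
  filter_upwards with x
  rw [Real.norm_eq_abs, abs_of_nonneg (hh_nonneg x)]
  exact hh_le x

theorem stmt_6 :
    f (3 / 2) (Real.sqrt 3) = ((3 : ℝ) ^ ((1 : ℝ) / 4) / 2) *
      ∫ x in Set.Ioo (0 : ℝ) (1 / Real.sqrt 3),
        (Real.sqrt (X x - 2 * x) + Real.sqrt (X x + 2 * x)) /
          (Real.sqrt ((x ^ 2 + 1) * (1 - 3 * x ^ 2)) *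
            Real.sqrt (X x * (X x + 2 / Real.sqrt 3))) := by
  have h0 : f (3/2) (Real.sqrt 3) = ∫ x in Set.Ioi (0:ℝ), hh x := by
    unfold f hh
    norm_num
  -- split the integral
  have int01 : IntegrableOn hh (Set.Ioc (0:ℝ) 1) :=
    integrableOn_hh.mono_set Set.Ioc_subset_Ioi_self
  have int1i : IntegrableOn hh (Set.Ioi (1:ℝ)) :=
    integrableOn_hh.mono_set (Set.Ioi_subset_Ioi zero_le_one)
  have hsplit : ∫ x in Set.Ioi (0:ℝ), hh x
      = (∫ x in Set.Ioc (0:ℝ) 1, hh x) + ∫ x in Set.Ioi (1:ℝ), hh x := by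
    rw [← MeasureTheory.setIntegral_union (Set.Ioc_disjoint_Ioi le_rfl) measurableSet_Ioi
      int01 int1i, Set.Ioc_union_Ioi_eq_Ioi zero_le_one]
  -- inversion substitution
  have hder : ∀ u ∈ Set.Ioo (0:ℝ) 1,
      HasDerivWithinAt (fun u : ℝ => u⁻¹) (-(u^2)⁻¹) (Set.Ioo 0 1) u :=
    fun u hu => (hasDerivAt_inv hu.1.ne').hasDerivWithinAt
  have hinj : Set.InjOn (fun u : ℝ => u⁻¹) (Set.Ioo 0 1) :=
    fun a _ b _ h => inv_injective h
  have hinvimg : (fun u : ℝ => u⁻¹) '' Set.Ioo 0 1 = Set.Ioi 1 := by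
    ext y
    constructor
    · rintro ⟨u, ⟨hu0, hu1⟩, rfl⟩
      exact (one_lt_inv_iff₀).2 ⟨hu0, hu1⟩
    · intro hy
      have hy0 : (0:ℝ) < y := lt_trans one_pos hy
      exact ⟨y⁻¹, ⟨inv_pos.2 hy0, inv_lt_one_of_one_lt₀ hy⟩, inv_inv y⟩
  have hsub1 : ∫ x in Set.Ioi (1:ℝ), hh x
      = ∫ u in Set.Ioo (0:ℝ) 1, |(-(u^2)⁻¹)| • hh u⁻¹ := by
    rw [← hinvimg,
      MeasureTheory.integral_image_eq_integral_abs_deriv_smul measurableSet_Ioo hder hinj hh]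
  have intinv : IntegrableOn (fun u : ℝ => |(-(u^2)⁻¹)| • hh u⁻¹) (Set.Ioo 0 1) := by
    have := (MeasureTheory.integrableOn_image_iff_integrableOn_abs_deriv_smul
      measurableSet_Ioo hder hinj hh).1
    rw [hinvimg] at this
    exact this int1i
  have int01' : IntegrableOn hh (Set.Ioo (0:ℝ) 1) :=
    int01.mono_set Set.Ioo_subset_Ioc_self
  -- combine into a single integral over Ioo 0 1
  have hcomb : f (3/2) (Real.sqrt 3)
      = ∫ t in Set.Ioo (0:ℝ) 1, (hh t + |(-(t^2)⁻¹)| • hh t⁻¹) := by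
    rw [h0, hsplit, MeasureTheory.integral_Ioc_eq_integral_Ioo, hsub1,
      ← MeasureTheory.integral_add int01' intinv]
  -- pointwise identity
  have hptwise : ∀ t ∈ Set.Ioo (0:ℝ) 1,
      hh t + |(-(t^2)⁻¹)| • hh t⁻¹
        = ((3:ℝ) ^ ((1:ℝ)/4) / 2) * (|Φd t| • gg (Φ t)) := by
    intro t ht
    rw [smul_eq_mul, smul_eq_mul, abs_neg, abs_of_nonneg (by positivity : (0:ℝ) ≤ (t^2)⁻¹)]
    exact key_total ht
  have hsub2 : ∫ t in Set.Ioo (0:ℝ) 1, |Φd t| • gg (Φ t)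
      = ∫ x in Set.Ioo (0:ℝ) (1 / Real.sqrt 3), gg x := by
    rw [← image_Φ,
      MeasureTheory.integral_image_eq_integral_abs_deriv_smul measurableSet_Ioo
        (fun t _ => (hasDerivAt_Φ t).hasDerivWithinAt) injOn_Φ gg]
  calc f (3/2) (Real.sqrt 3)
      = ∫ t in Set.Ioo (0:ℝ) 1, (hh t + |(-(t^2)⁻¹)| • hh t⁻¹) := hcomb
    _ = ∫ t in Set.Ioo (0:ℝ) 1, ((3:ℝ) ^ ((1:ℝ)/4) / 2) * (|Φd t| • gg (Φ t)) :=
        MeasureTheory.setIntegral_congr_fun measurableSet_Ioo hptwise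
    _ = ((3:ℝ) ^ ((1:ℝ)/4) / 2) * ∫ t in Set.Ioo (0:ℝ) 1, |Φd t| • gg (Φ t) :=
        MeasureTheory.integral_const_mul _ _
    _ = ((3:ℝ) ^ ((1:ℝ)/4) / 2) * ∫ x in Set.Ioo (0:ℝ) (1 / Real.sqrt 3), gg x := by
        rw [hsub2]
    _ = _ := rfl
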